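/- Let p be a prime and let M be a GF(p)-representable matroid with a rank-(k−1) flat C spanned by a basis {e_1,…,e_{k−1}}, and an element f ∉ cl(C), such that for every e ∈ C and every g ∉ C the line spanned by {e,g} has exactly p+1 points. Then the set S = cl({f, e_1, …, e_{k−1}}) \ C has exactly p^{k−1} elements and M|S is isomorphic to AG(k−1,p). -/

import Mathlib

open Matroid Set

namespace SGK

variable {α : Type*}

/-- The rank of a set `X` in a matroid `M`, as a value in `ℕ∞`. -/
noncomputable def rk (M : Matroid α) (X : Set α) : ℕ∞ :=
  sSup {n : ℕ∞ | ∃ I, M.Indep I ∧ I ⊆ X ∧ I.encard = n}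

/-- The rank of a matroid. -/
noncomputable def Rank (M : Matroid α) : ℕ∞ := rk M M.E

/-- A matroid is simple if it has no loops and no parallel pairs,
equivalently every set of at most two ground elements is independent. -/
def Simple (M : Matroid α) : Prop := ∀ e ∈ M.E, ∀ f ∈ M.E, M.Indep {e, f}

/-- `M` is representable over the field `F`: there is a map from the ground set to a
finite-dimensional `F`-vector space whose linear independence structure matches `M`. -/
def IsRep (F : Type*) [Field F] (M : Matroid α) : Prop :=
  ∃ (n : ℕ) (v : α → (Fin n → F)),
    ∀ I ⊆ M.E, (M.Indep I ↔ LinearIndependent F (I.restrict v))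

/-- The points (rank-1 flats) of `M` contained in the set `X`. -/
def points (M : Matroid α) (X : Set α) : Set (Set α) :=
  {P | M.IsFlat P ∧ P ⊆ X ∧ rk M P = 1}

/-- A line of `M` is a rank-2 flat. -/
def IsLine (M : Matroid α) (L : Set α) : Prop := M.IsFlat L ∧ rk M L = 2

/-- A circuit is a minimal dependent set. -/
def Circuit (M : Matroid α) (C : Set α) : Prop := Minimal M.Dep C

/-- A coloop is an element contained in every base. -/
def Coloop (M : Matroid α) (e : α) : Prop := ∀ B, M.IsBase B → e ∈ B

/-- Contraction of the set `C`, defined by duality: `M ／ C = (M✶ ＼ C)✶`. -/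
def con (M : Matroid α) (C : Set α) : Matroid α := (M✶ ↾ (M.E \ C))✶

/-- A matroid is connected if it is nonempty and cannot be written as the direct
sum of two nonempty matroids. -/
def Connected (M : Matroid α) : Prop :=
  M.E.Nonempty ∧ ¬ ∃ A B : Set α, A ∪ B = M.E ∧ Disjoint A B ∧ A.Nonempty ∧ B.Nonempty ∧
    ∀ I ⊆ M.E, M.Indep (I ∩ A) → M.Indep (I ∩ B) → M.Indep I

/-- `M` is isomorphic to the affine geometry `AG(d, F)` (of rank `d + 1`): its ground
set is in bijection with the affine space `F^d` in a way matching affine independence. -/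
def IsAG (F : Type*) [Field F] (d : ℕ) (M : Matroid α) : Prop :=
  ∃ v : α → (Fin d → F),
    (∀ I ⊆ M.E, (M.Indep I ↔ AffineIndependent F (I.restrict v))) ∧
    Set.InjOn v M.E ∧
    (∀ w : Fin d → F, ∃ e ∈ M.E, v e = w)

/-- `M` is isomorphic to the projective geometry `PG(k-1, F)` (of rank `k`): its ground
set is in bijection with the set of one-dimensional subspaces of `F^k`, matching
linear independence. -/
def IsPG (F : Type*) [Field F] (k : ℕ) (M : Matroid α) : Prop :=
  ∃ v : α → (Fin k → F),
    (∀ I ⊆ M.E, (M.Indep I ↔ LinearIndependent F (I.restrict v))) ∧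
    (∀ e ∈ M.E, v e ≠ 0) ∧
    (∀ e ∈ M.E, ∀ f ∈ M.E,
      Submodule.span F {v e} = Submodule.span F {v f} → e = f) ∧
    (∀ w : Fin k → F, w ≠ 0 → ∃ e ∈ M.E, Submodule.span F {w} = Submodule.span F {v e})

end SGK

/-!
Fix a representation `v` of `M` over `GF(p)`. As `f ∉ cl(C)`, the vectors
`v f, v e₁, …, v e_{k-1}` are independent, so each element `x ∈ S` has, up to a nonzero scalar,
a unique vector of the form `v f + ∑ wᵢ • v eᵢ`, and `x ↦ w` is the isomorphism onto
`GF(p)^{k-1}`. It is onto: a line through `eᵢ ∈ C` and `g ∉ C` has `p + 1` points, as many as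
the projective line of the plane `span(v eᵢ, v g)`, so every vector of that plane is a multiple
of the vector of an element; starting from `f` and adding multiples of `v e₁, v e₂, …` one at a
time reaches every `w`. Finally, the vectors `v f + ∑ wₓᵢ • v eᵢ` are linearly independent
exactly when the points `wₓ` are affinely independent, because
`(s, w) ↦ s • v f + ∑ wᵢ • v eᵢ` is injective.
-/

open Submodule
open scoped LinearAlgebra.Projectivization

namespace SGK

section LinearAlgebra

variable {F V ι : Type*} [Field F] [AddCommGroup V] [Module F V]

theorem exists_units_smul_eq_of_encard_eq_card_add_one {β : Type*} [Finite F] {u₁ u₂ : V}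
    (hu : LinearIndependent F ![u₁, u₂]) {x : β → V} {L : Set β}
    (hxL : ∀ i ∈ L, x i ∈ span F {u₁, u₂}) (hx0 : ∀ i ∈ L, x i ≠ 0)
    (hxinj : ∀ i ∈ L, ∀ j ∈ L, ∀ c : Fˣ, c • x i = x j → i = j)
    (hL : L.encard = ((Nat.card F + 1 : ℕ) : ℕ∞)) {z : V} (hz : z ∈ span F {u₁, u₂})
    (hz0 : z ≠ 0) : ∃ i ∈ L, ∃ c : Fˣ, c • x i = z := by
  have hfinrank : Module.finrank F (span F {u₁, u₂}) = 2 := by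
    have h := finrank_span_eq_card hu
    rwa [Matrix.range_cons_cons_empty, Fintype.card_fin] at h
  have hcardP : Nat.card (ℙ F (span F {u₁, u₂})) = Nat.card F + 1 :=
    Projectivization.card_of_finrank_two F _ hfinrank
  have : Finite (ℙ F (span F {u₁, u₂})) := Nat.finite_of_card_ne_zero (by simp [hcardP])
  let π : L → ℙ F (span F {u₁, u₂}) := fun i =>
    .mk F ⟨x i, hxL i i.2⟩ (by simpa using hx0 i i.2)
  have hπ : Function.Injective π := by
    rintro ⟨i, hi⟩ ⟨j, hj⟩ h
    obtain ⟨c, hc⟩ := (Projectivization.mk_eq_mk_iff _ _ _ _ _).mp h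
    exact Subtype.ext (hxinj j hj i hi c (congrArg Subtype.val hc)).symm
  have hcard : Nat.card (ℙ F (span F {u₁, u₂})) ≤ Nat.card L := by
    rw [hcardP, Nat.card_coe_set_eq, ncard_def, hL]
    rfl
  obtain ⟨⟨i, hi⟩, hzi⟩ :=
    (hπ.bijective_of_nat_card_le hcard).2 (.mk F ⟨z, hz⟩ (by simpa using hz0))
  obtain ⟨c, hc⟩ := (Projectivization.mk_eq_mk_iff _ _ _ _ _).mp hzi.symm
  exact ⟨i, hi, c, congrArg Subtype.val hc⟩

theorem linearIndependent_one_prod_iff {R κ E : Type*} [Ring R] [AddCommGroup E] [Module R E]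
    (p : κ → E) : LinearIndependent R (fun x => ((1 : R), p x)) ↔ AffineIndependent R p := by
  rw [affineIndependent_iff, linearIndependent_iff']
  simp only [Prod.ext_iff, Prod.fst_sum, Prod.snd_sum, Prod.smul_mk, smul_eq_mul, mul_one,
    Prod.fst_zero, Prod.snd_zero]
  exact forall₂_congr fun s g => ⟨fun h h0 h1 => h ⟨h0, h1⟩, fun h h01 => h h01.1 h01.2⟩

theorem units_smul_add_sum_notMem_span {a : V} {e : ι → V} (ha : a ∉ span F (range e))
    (c : Fˣ) (s : Finset ι) (w : ι → F) : c • (a + ∑ i ∈ s, w i • e i) ∉ span F (range e) := by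
  intro h
  have hsum : ∑ i ∈ s, w i • e i ∈ span F (range e) :=
    sum_mem fun i _ => smul_mem _ _ (subset_span (mem_range_self i))
  exact ha ((add_mem_cancel_right hsum).mp ((smul_mem_iff' _ c).mp h))

variable [Fintype ι]

def affinePoint (a : V) (e : ι → V) (w : ι → F) : V := a + ∑ i, w i • e i

variable (F) in
def homogMap (a : V) (e : ι → V) : F × (ι → F) →ₗ[F] V :=
  (LinearMap.fst F F (ι → F)).smulRight a +
    Fintype.linearCombination F e ∘ₗ LinearMap.snd F F (ι → F)

theorem homogMap_apply (a : V) (e : ι → V) (x : F × (ι → F)) :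
    homogMap F a e x = x.1 • a + ∑ i, x.2 i • e i := by
  simp [homogMap, Fintype.linearCombination_apply]

variable {a : V} {e : ι → V}

theorem homogMap_injective (he : LinearIndependent F e) (ha : a ∉ span F (range e)) :
    Function.Injective (homogMap F a e) := by
  refine (injective_iff_map_eq_zero (homogMap F a e)).mpr fun ⟨s, w⟩ h => ?_
  simp only [homogMap_apply, add_eq_zero_iff_eq_neg] at h
  have hs : s = 0 := by
    by_contra hs
    refine ha ((smul_mem_iff _ hs).mp (h ▸ neg_mem (sum_mem fun i _ => ?_)))
    exact smul_mem _ _ (subset_span (mem_range_self i))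
  rw [hs, zero_smul, zero_eq_neg] at h
  exact Prod.ext hs (funext (Fintype.linearIndependent_iff.mp he w h))

theorem linearIndependent_affinePoint_iff (he : LinearIndependent F e)
    (ha : a ∉ span F (range e)) {κ : Type*} (p : κ → ι → F) :
    LinearIndependent F (fun x => affinePoint a e (p x)) ↔ AffineIndependent F p := by
  have hcomp : (fun x => affinePoint a e (p x)) = homogMap F a e ∘ fun x => ((1 : F), p x) := by
    ext x
    simp [homogMap_apply, affinePoint]
  rw [hcomp, LinearMap.linearIndependent_iff_of_injOn _ (homogMap_injective he ha).injOn,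
    linearIndependent_one_prod_iff]

theorem units_smul_affinePoint_injective (he : LinearIndependent F e)
    (ha : a ∉ span F (range e)) :
    Function.Injective fun cw : Fˣ × (ι → F) => cw.1 • affinePoint a e cw.2 := by
  have hhomog : ∀ (c : Fˣ) (w : ι → F),
      c • affinePoint a e w = homogMap F a e ((c : F), (c : F) • w) := by
    intro c w
    simp [homogMap_apply, affinePoint, Units.smul_def, Finset.smul_sum, smul_smul]
  rintro ⟨c, w⟩ ⟨c', w'⟩ h
  simp only at h
  rw [hhomog, hhomog] at h
  obtain ⟨hc, hw⟩ := Prod.ext_iff.mp (homogMap_injective he ha h)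
  obtain rfl : c = c' := Units.ext hc
  simp only [Prod.mk.injEq, true_and]
  exact smul_right_injective _ c.ne_zero hw

theorem exists_units_smul_affinePoint_eq_iff (ha : a ∉ span F (range e)) {y : V} :
    (∃ (c : Fˣ) (w : ι → F), c • affinePoint a e w = y) ↔
      y ∈ span F (insert a (range e)) ∧ y ∉ span F (range e) := by
  constructor
  · rintro ⟨c, w, rfl⟩
    refine ⟨smul_of_tower_mem _ _ ?_, units_smul_add_sum_notMem_span ha c Finset.univ w⟩
    refine add_mem (subset_span (mem_insert _ _)) (sum_mem fun i _ => smul_mem _ _ ?_)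
    exact subset_span (mem_insert_of_mem _ (mem_range_self i))
  · rintro ⟨hy, hyC⟩
    obtain ⟨r, z, hz, rfl⟩ := mem_span_insert.mp hy
    obtain ⟨w, rfl⟩ := (mem_span_range_iff_exists_fun F).mp hz
    have hr : r ≠ 0 := by
      rintro rfl
      exact hyC (by simpa using hz)
    refine ⟨Units.mk0 r hr, r⁻¹ • w, ?_⟩
    simp [affinePoint, Units.smul_def, Finset.smul_sum, smul_smul, ← mul_assoc,
      mul_inv_cancel₀ hr]

theorem exists_affine_chart {α : Type*} (he : LinearIndependent F e) (ha : a ∉ span F (range e))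
    {v : α → V} {S : Set α}
    (hS : ∀ x ∈ S, ∃ (c : Fˣ) (w : ι → F), c • affinePoint a e w = v x)
    (hsurj : ∀ w : ι → F, ∃ x ∈ S, ∃ c : Fˣ, c • affinePoint a e w = v x)
    (hinj : ∀ x ∈ S, ∀ y ∈ S, ∀ c : Fˣ, c • v x = v y → x = y) :
    ∃ φ : α → ι → F, BijOn φ S univ ∧
      ∀ I ⊆ S, LinearIndepOn F v I ↔ AffineIndependent F fun x : I => φ x := by
  set T : Fˣ × (ι → F) → V := fun cw => cw.1 • affinePoint a e cw.2
  obtain ⟨c, φ, hspec, hcoord⟩ : ∃ (c : α → Fˣ) (φ : α → ι → F),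
      (∀ x ∈ S, c x • affinePoint a e (φ x) = v x) ∧
      ∀ x (c' : Fˣ) w, c' • affinePoint a e w = v x → φ x = w := by
    refine ⟨fun x => (Function.invFun T (v x)).1, fun x => (Function.invFun T (v x)).2,
      fun x hx => ?_, fun x c' w h => ?_⟩
    · obtain ⟨c', w, h⟩ := hS x hx
      exact Function.invFun_eq (f := T) ⟨(c', w), h⟩
    · change (Function.invFun T (v x)).2 = w
      rw [← h]
      exact congrArg Prod.snd
        (Function.leftInverse_invFun (units_smul_affinePoint_injective he ha) (c', w))
  refine ⟨φ, ⟨mapsTo_univ _ _, fun x hx y hy hxy => ?_, fun w _ => ?_⟩, fun I hI => ?_⟩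
  · refine hinj x hx y hy (c y * (c x)⁻¹) ?_
    rw [← hspec x hx, ← hspec y hy, hxy, mul_smul, inv_smul_smul]
  · obtain ⟨x, hx, c', h⟩ := hsurj w
    exact ⟨x, hx, hcoord x c' w h⟩
  · have hv : (fun x : I => v x) = (fun x : I => c x) • fun x : I => affinePoint a e (φ x) :=
      funext fun x => (hspec x (hI x.2)).symm
    rw [LinearIndepOn, hv, LinearIndependent.units_smul_iff,
      linearIndependent_affinePoint_iff he ha]

theorem exists_units_smul_affinePoint_mem (ha : a ∉ span F (range e)) {P : Set V} (haP : a ∈ P)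
    (hline : ∀ i, ∀ y ∈ P, y ∉ span F (range e) → ∀ z ∈ span F {e i, y}, z ≠ 0 →
      ∃ c : Fˣ, c • z ∈ P)
    (w : ι → F) : ∃ c : Fˣ, c • affinePoint a e w ∈ P := by
  classical
  suffices ∀ s : Finset ι, ∃ c : Fˣ, c • (a + ∑ i ∈ s, w i • e i) ∈ P from this Finset.univ
  intro s
  induction s using Finset.induction_on with
  | empty => exact ⟨1, by simpa using haP⟩
  | insert j s hj ih =>
    obtain ⟨c, hc⟩ := ih
    have hz : a + ∑ i ∈ insert j s, w i • e i ∈ span F {e j, c • (a + ∑ i ∈ s, w i • e i)} := by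
      refine mem_span_pair.mpr ⟨w j, ((c⁻¹ : Fˣ) : F), ?_⟩
      rw [Finset.sum_insert hj, ← Units.smul_def, inv_smul_smul]
      abel
    have hz0 : a + ∑ i ∈ insert j s, w i • e i ≠ 0 := fun h0 => by
      simpa [h0] using units_smul_add_sum_notMem_span ha 1 (insert j s) w
    exact hline j _ hc (units_smul_add_sum_notMem_span ha c s w) _ hz hz0

end LinearAlgebra

section Matroid

variable {α : Type*} {M : Matroid α}

theorem rk_eq_eRk (M : Matroid α) (X : Set α) : rk M X = M.eRk X := by
  refine le_antisymm (sSup_le ?_) ?_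
  · rintro _ ⟨I, hI, hIX, rfl⟩
    exact hI.encard_le_eRk_of_subset hIX
  · obtain ⟨I, hI⟩ := M.exists_isBasis' X
    exact le_sSup ⟨I, hI.indep, hI.subset, hI.encard_eq_eRk⟩

theorem Simple.indep_singleton (hS : Simple M) {x : α} (hx : x ∈ M.E) : M.Indep {x} := by
  simpa using hS x hx x hx

theorem Simple.closure_singleton (hS : Simple M) {x : α} (hx : x ∈ M.E) :
    M.closure {x} = {x} := by
  refine subset_antisymm (fun y hy => by_contra fun hyx => ?_)
    (M.subset_closure _ (singleton_subset_iff.mpr hx))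
  rw [(hS.indep_singleton hx).mem_closure_iff_of_notMem hyx] at hy
  exact hy.not_indep (hS y (hy.subset_ground (mem_insert y _)) x hx)

theorem Simple.points_eq_image (hS : Simple M) {X : Set α} (hX : X ⊆ M.E) :
    points M X = (fun x => ({x} : Set α)) '' X := by
  ext P
  constructor
  · rintro ⟨-, hPX, hrk⟩
    rw [rk_eq_eRk, eRk_eq_one_iff (hPX.trans hX)] at hrk
    obtain ⟨x, hxP, -, hPx⟩ := hrk
    refine ⟨x, hPX hxP, subset_antisymm (singleton_subset_iff.mpr hxP) ?_⟩
    exact hPx.trans (hS.closure_singleton (hX (hPX hxP))).subset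
  · rintro ⟨x, hx, rfl⟩
    refine ⟨isFlat_iff_closure_eq.mpr (hS.closure_singleton (hX hx)),
      singleton_subset_iff.mpr hx, ?_⟩
    rw [rk_eq_eRk, (hS.indep_singleton (hX hx)).eRk_eq_encard, encard_singleton]

theorem Simple.encard_points (hS : Simple M) {X : Set α} (hX : X ⊆ M.E) :
    (points M X).encard = X.encard := by
  rw [hS.points_eq_image hX, (singleton_injective.injOn).encard_image]

variable {F V : Type*} [Field F] [AddCommGroup V] [Module F V]

variable (F) in
def Represents (M : Matroid α) (v : α → V) : Prop :=
  ∀ I ⊆ M.E, (M.Indep I ↔ LinearIndepOn F v I)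

variable {v : α → V}

theorem Represents.mem_closure_iff_of_indep (hv : Represents F M v) {I : Set α} (hI : M.Indep I)
    {x : α} (hx : x ∈ M.E) : x ∈ M.closure I ↔ v x ∈ span F (v '' I) := by
  by_cases hxI : x ∈ I
  · exact iff_of_true (M.subset_closure I hI.subset_ground hxI)
      (subset_span (mem_image_of_mem v hxI))
  have h := hv _ (insert_subset hx hI.subset_ground)
  rw [hI.insert_indep_iff_of_notMem hxI, linearIndepOn_insert hxI,
    and_iff_right ((hv I hI.subset_ground).mp hI), mem_sdiff, and_iff_right hx] at h
  exact not_iff_not.mp h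

theorem Represents.mem_closure_iff (hv : Represents F M v) {X : Set α} (hX : X ⊆ M.E) {x : α}
    (hx : x ∈ M.E) : x ∈ M.closure X ↔ v x ∈ span F (v '' X) := by
  obtain ⟨I, hI⟩ := M.exists_isBasis X
  have hspan : span F (v '' X) = span F (v '' I) := by
    refine le_antisymm (span_le.mpr ?_) (span_mono (image_mono hI.subset))
    rintro _ ⟨y, hy, rfl⟩
    exact (hv.mem_closure_iff_of_indep hI.indep (hX hy)).mp (hI.subset_closure hy)
  rw [← hI.closure_eq_closure, hspan, hv.mem_closure_iff_of_indep hI.indep hx]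

theorem Represents.ne_zero (hv : Represents F M v) (hS : Simple M) {x : α} (hx : x ∈ M.E) :
    v x ≠ 0 :=
  ((hv {x} (singleton_subset_iff.mpr hx)).mp (hS.indep_singleton hx)).ne_zero (mem_singleton x)

theorem Represents.smul_ne (hv : Represents F M v) (hS : Simple M) {x y : α} (hx : x ∈ M.E)
    (hy : y ∈ M.E) (hxy : x ≠ y) (c : F) : c • v x ≠ v y :=
  (linearIndepOn_pair_iff v hxy (hv.ne_zero hS hx)).mp
    ((hv _ (pair_subset hx hy)).mp (hS x hx y hy)) c

theorem Represents.eq_of_units_smul_eq (hv : Represents F M v) (hS : Simple M) {x y : α}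
    (hx : x ∈ M.E) (hy : y ∈ M.E) {c : Fˣ} (h : c • v x = v y) : x = y :=
  by_contra fun hxy => hv.smul_ne hS hx hy hxy c h

theorem Represents.exists_units_smul_eq_of_mem_span_pair [Finite F] (hv : Represents F M v)
    (hS : Simple M) {x y : α} (hx : x ∈ M.E) (hy : y ∈ M.E) (hxy : x ≠ y)
    (hline : (M.closure {x, y}).encard = ((Nat.card F + 1 : ℕ) : ℕ∞)) {z : V}
    (hz : z ∈ span F {v x, v y}) (hz0 : z ≠ 0) : ∃ u ∈ M.E, ∃ c : Fˣ, c • v u = z := by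
  have hxyE : {x, y} ⊆ M.E := pair_subset hx hy
  have hL : M.closure {x, y} ⊆ M.E := M.closure_subset_ground _
  obtain ⟨u, hu, c, hc⟩ := exists_units_smul_eq_of_encard_eq_card_add_one
    ((LinearIndependent.pair_iff' (hv.ne_zero hS hx)).mpr (hv.smul_ne hS hx hy hxy))
    (fun u hu => by simpa [image_pair] using (hv.mem_closure_iff hxyE (hL hu)).mp hu)
    (fun u hu => hv.ne_zero hS (hL hu))
    (fun u hu w hw c h => hv.eq_of_units_smul_eq hS (hL hu) (hL hw) h) hline hz hz0
  exact ⟨u, hL hu, c, hc⟩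

end Matroid

section Configuration

variable {α F V ι : Type*} [Field F] [AddCommGroup V] [Module F V]
  {M : Matroid α} {v : α → V} {C : Set α} {b : ι → α}

theorem Represents.mem_iff_mem_span_of_isBasis (hv : Represents F M v) (hC : M.IsFlat C)
    (hbasis : M.IsBasis (range b) C) {x : α} (hx : x ∈ M.E) :
    x ∈ C ↔ v x ∈ span F (range (v ∘ b)) := by
  rw [range_comp, ← hv.mem_closure_iff (hbasis.subset.trans hC.subset_ground) hx,
    hbasis.closure_eq_closure, hC.closure]

variable [Fintype ι] {f : α}

theorem Represents.mem_closure_insert_diff_iff (hv : Represents F M v) (hC : M.IsFlat C)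
    (hbasis : M.IsBasis (range b) C) (hf : f ∈ M.E) (hfC : f ∉ C) {x : α} (hx : x ∈ M.E) :
    x ∈ M.closure (insert f (range b)) \ C ↔
      ∃ (c : Fˣ) (w : ι → F), c • affinePoint (v f) (v ∘ b) w = v x := by
  rw [exists_units_smul_affinePoint_eq_iff
      ((hv.mem_iff_mem_span_of_isBasis hC hbasis hf).not.mp hfC), mem_sdiff,
    hv.mem_closure_iff (insert_subset hf (hbasis.subset.trans hC.subset_ground)) hx,
    hv.mem_iff_mem_span_of_isBasis hC hbasis hx, image_insert_eq, range_comp]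

theorem Represents.exists_mem_units_smul_affinePoint_eq [Finite F] (hv : Represents F M v)
    (hS : Simple M) (hC : M.IsFlat C) (hbasis : M.IsBasis (range b) C) (hf : f ∈ M.E)
    (hfC : f ∉ C)
    (hlines : ∀ e ∈ C, ∀ g ∈ M.E, g ∉ C →
      (M.closure {e, g}).encard = ((Nat.card F + 1 : ℕ) : ℕ∞))
    (w : ι → F) : ∃ x ∈ M.closure (insert f (range b)) \ C, ∃ c : Fˣ,
      c • affinePoint (v f) (v ∘ b) w = v x := by
  have hCspan {x : α} (hx : x ∈ M.E) := hv.mem_iff_mem_span_of_isBasis hC hbasis hx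
  have hline : ∀ i, ∀ y ∈ v '' M.E, y ∉ span F (range (v ∘ b)) →
      ∀ z ∈ span F {(v ∘ b) i, y}, z ≠ 0 → ∃ c : Fˣ, c • z ∈ v '' M.E := by
    rintro i _ ⟨g, hg, rfl⟩ hgC z hz hz0
    have hbi : b i ∈ C := hbasis.subset (mem_range_self i)
    have hgC' : g ∉ C := (hCspan hg).not.mpr hgC
    obtain ⟨u, hu, c, hc⟩ := hv.exists_units_smul_eq_of_mem_span_pair hS (hC.subset_ground hbi)
      hg (ne_of_mem_of_not_mem hbi hgC') (hlines _ hbi g hg hgC') hz hz0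
    exact ⟨c⁻¹, u, hu, by rw [← hc, inv_smul_smul]⟩
  obtain ⟨c, x, hx, hxc⟩ :=
    exists_units_smul_affinePoint_mem ((hCspan hf).not.mp hfC) (mem_image_of_mem v hf) hline w
  exact ⟨x, (hv.mem_closure_insert_diff_iff hC hbasis hf hfC hx).mpr ⟨c, w, hxc.symm⟩, c,
    hxc.symm⟩

end Configuration

end SGK

open SGK in
theorem stmt_19_general {α : Type*} (p k : ℕ) [Fact p.Prime] (M : Matroid α)
    (hS : SGK.Simple M) (hR : SGK.IsRep (ZMod p) M)
    (C : Set α) (hC : M.IsFlat C)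
    (b : Fin (k - 1) → α) (hb : Function.Injective b)
    (hbasis : M.IsBasis (Set.range b) C)
    (f : α) (hf : f ∈ M.E) (hfC : f ∉ C)
    (hlines : ∀ e ∈ C, ∀ g ∈ M.E, g ∉ C →
      (SGK.points M (M.closure {e, g})).encard = ((p + 1 : ℕ) : ℕ∞)) :
    (M.closure (insert f (Set.range b)) \ C).encard = ((p ^ (k - 1) : ℕ) : ℕ∞) ∧
    SGK.IsAG (ZMod p) (k - 1) (M ↾ (M.closure (insert f (Set.range b)) \ C)) := by
  obtain ⟨n, v, hv⟩ := hR
  replace hv : Represents (ZMod p) M v := hv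
  have hSE : M.closure (insert f (range b)) \ C ⊆ M.E :=
    sdiff_subset.trans (M.closure_subset_ground _)
  have hlines' : ∀ e ∈ C, ∀ g ∈ M.E, g ∉ C →
      (M.closure {e, g}).encard = ((Nat.card (ZMod p) + 1 : ℕ) : ℕ∞) := fun e he g hg hgC => by
    rw [← hS.encard_points (M.closure_subset_ground _), hlines e he g hg hgC, Nat.card_zmod]
  obtain ⟨φ, hφ, hindep⟩ := exists_affine_chart
    ((linearIndepOn_range_iff hb v).mp
      ((hv _ (hbasis.subset.trans hC.subset_ground)).mp hbasis.indep))
    ((hv.mem_iff_mem_span_of_isBasis hC hbasis hf).not.mp hfC)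
    (fun x hx => (hv.mem_closure_insert_diff_iff hC hbasis hf hfC (hSE hx)).mp hx)
    (hv.exists_mem_units_smul_affinePoint_eq hS hC hbasis hf hfC hlines')
    (fun x hx y hy c h => hv.eq_of_units_smul_eq hS (hSE hx) (hSE hy) h)
  refine ⟨?_, φ, fun I hI => ?_, hφ.injOn, fun w => hφ.surjOn (mem_univ w)⟩
  · rw [← hφ.injOn.encard_image, hφ.image_eq, encard_univ, ENat.card_eq_coe_fintype_card]
    simp
  · rw [restrict_ground_eq] at hI
    rw [restrict_indep_iff, hv I (hI.trans hSE), and_iff_left hI]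
    exact hindep I hI

/-- If `C` is a rank-`(k-1)` flat of a simple `GF(p)`-representable matroid spanned by a
basis `e_1, …, e_{k-1}`, `f ∉ C` is a ground element, and every line joining a point of `C`
to a point outside `C` has exactly `p + 1` points, then
`S = cl({f, e_1, …, e_{k-1}}) \ C` has exactly `p^{k-1}` elements and
`M|S ≅ AG(k-1, p)`. -/
theorem stmt_19 {α : Type*} (p k : ℕ) [Fact p.Prime] (hk : 1 ≤ k) (M : Matroid α)
    (hS : SGK.Simple M) (hR : SGK.IsRep (ZMod p) M)
    (C : Set α) (hC : M.IsFlat C)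
    (b : Fin (k - 1) → α) (hb : Function.Injective b)
    (hbasis : M.IsBasis (Set.range b) C)
    (f : α) (hf : f ∈ M.E) (hfC : f ∉ C)
    (hlines : ∀ e ∈ C, ∀ g ∈ M.E, g ∉ C →
      (SGK.points M (M.closure {e, g})).encard = ((p + 1 : ℕ) : ℕ∞)) :
    (M.closure (insert f (Set.range b)) \ C).encard = ((p ^ (k - 1) : ℕ) : ℕ∞) ∧
    SGK.IsAG (ZMod p) (k - 1) (M ↾ (M.closure (insert f (Set.range b)) \ C)) :=
  stmt_19_general p k M hS hR C hC b hb hbasis f hf hfC hlines
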